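/- arXiv:1902.00668 — 7 statements merged into one kernel-verified Lean document; each statement's English description precedes it below -/
import Mathlib

section
/- Let n ≥ 3 and let T = (t_{i,j}) be an invertible n×n real matrix with all entries positive such that t_{i,i} ≥ Σ_{j≠i} t_{i,j} for every row i. Let S be the diagonal matrix with S_{i,i} = 1/t_{i,i}. If C(m,M) > 0, then max_{i,j} |(T^{-1} − S)_{i,j}| ≤ M / (m² (n−1)² C(m,M)). -/
/-!
Fix a column `j` and let `u` be the `j`-th column of `T⁻¹ - S`. Then `(T u)_j = 0` and
`(T u)_k = -t_{kj} / t_{jj} ∈ [-M / ((n - 1) m), 0]` for `k ≠ j`. Let `u α` be the largest and `u p`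
the smallest entry of `u`. Row `j` forces `u α ≥ 0`, and row `α`, by diagonal dominance, forces
`u α + u p ≤ 0`, so `|u i| ≤ -u p`. Estimating rows `p` and `α` through the extremal entries and
adding them gives `2 m (n - 2) (-u p) ≤ -(T u)_p + (t_{αα} + (n - 2) m - t_{pp}) e` with
`e = -(u α + u p) ≥ 0`, while row `p` alone gives `t_{pp} e ≤ -(T u)_p`. Eliminating `e` and using
`(n - 1) m ≤ t_{kk} ≤ n M` yields `|u i| ≤ M (n M + (n - 2) m) / (2 (n - 2) m³ (n - 1)²)`, which is
the claimed bound with `C(m,M)` replaced by its first term, a larger quantity.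
-/

/-- The constant `C(m,M)` from the paper (with its dependence on `n` explicit). -/
noncomputable def Capprox (n : ℕ) (m M : ℝ) : ℝ :=
  2 * ((n : ℝ) - 2) * m / ((n : ℝ) * M + ((n : ℝ) - 2) * m)
    - ((n : ℝ) - 2) * M * m / ((((n : ℝ) - 2) * m + M) * (((n : ℝ) - 2) * m + 2 * M))
    - M / (m * ((n : ℝ) - 1))

open Finset Matrix

theorem mul_le_mul_of_le_add_sub_mul {x w a e K B : ℝ} (ha : 0 ≤ a) (he : 0 ≤ e)
    (hae : a * e ≤ w) (hx : x ≤ w + (K - a) * e) (haB : a ≤ B) (hKB : K ≤ B) :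
    x * a ≤ w * B := by
  have hw : 0 ≤ w := (mul_nonneg ha he).trans hae
  rcases le_total K a with hKa | haK
  · have hxw : x ≤ w :=
      hx.trans (by linarith [mul_nonpos_of_nonpos_of_nonneg (sub_nonpos.2 hKa) he])
    calc x * a ≤ w * a := mul_le_mul_of_nonneg_right hxw ha
      _ ≤ w * B := mul_le_mul_of_nonneg_left haB hw
  · calc x * a ≤ (w + (K - a) * e) * a := mul_le_mul_of_nonneg_right hx ha
      _ = w * a + (K - a) * (a * e) := by ring
      _ ≤ w * a + (K - a) * w := by gcongr
      _ = w * K := by ring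
      _ ≤ w * B := mul_le_mul_of_nonneg_left hKB hw

section RowEstimates

variable {ι : Type*} [Fintype ι] {T : Matrix ι ι ℝ} {u : ι → ℝ} {i : ι} {c m : ℝ}

theorem nonneg_of_isMax_of_mulVec_nonneg {j α : ι} (hpos : ∀ k, 0 < T j k)
    (hj : 0 ≤ (T *ᵥ u) j) (hα : ∀ k, u k ≤ u α) : 0 ≤ u α := by
  by_contra! hneg
  have : (T *ᵥ u) j < 0 :=
    sum_neg (fun k _ => mul_neg_of_pos_of_neg (hpos k) ((hα k).trans_lt hneg)) ⟨j, mem_univ j⟩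
  linarith

variable [DecidableEq ι]

theorem mulVec_apply_eq_sum_erase (T : Matrix ι ι ℝ) (u : ι → ℝ) (i : ι) (c : ℝ) :
    (T *ᵥ u) i = ∑ k ∈ univ.erase i, T i k * (u k - c) + T i i * (u i + c)
      - c * (T i i - ∑ k ∈ univ.erase i, T i k) := by
  rw [mulVec, dotProduct, ← sum_erase_add _ _ (mem_univ i)]
  simp only [mul_sub, sum_sub_distrib, ← sum_mul]
  ring

theorem sum_erase_mul_sub_add_le_mulVec (hdom : ∑ k ∈ univ.erase i, T i k ≤ T i i) (hc : c ≤ 0) :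
    ∑ k ∈ univ.erase i, T i k * (u k - c) + T i i * (u i + c) ≤ (T *ᵥ u) i := by
  rw [mulVec_apply_eq_sum_erase T u i c]
  linarith [mul_nonpos_of_nonpos_of_nonneg hc (sub_nonneg.2 hdom)]

theorem mulVec_le_sum_erase_mul_sub_add (hdom : ∑ k ∈ univ.erase i, T i k ≤ T i i) (hc : 0 ≤ c) :
    (T *ᵥ u) i ≤ ∑ k ∈ univ.erase i, T i k * (u k - c) + T i i * (u i + c) := by
  rw [mulVec_apply_eq_sum_erase T u i c]
  linarith [mul_nonneg hc (sub_nonneg.2 hdom)]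

theorem mulVec_le_of_forall_le (hdom : ∑ k ∈ univ.erase i, T i k ≤ T i i)
    (hm : ∀ k, i ≠ k → m ≤ T i k) (hc : 0 ≤ c) (hu : ∀ k, u k ≤ c) :
    (T *ᵥ u) i ≤ m * ∑ k ∈ univ.erase i, (u k - c) + T i i * (u i + c) := by
  refine (mulVec_le_sum_erase_mul_sub_add hdom hc).trans (add_le_add_left ?_ _)
  rw [mul_sum]
  exact sum_le_sum fun k hk =>
    mul_le_mul_of_nonpos_right (hm k (ne_of_mem_erase hk).symm) (sub_nonpos.2 (hu k))

theorem le_mulVec_of_forall_ge (hdom : ∑ k ∈ univ.erase i, T i k ≤ T i i)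
    (hm : ∀ k, i ≠ k → m ≤ T i k) (hc : c ≤ 0) (hu : ∀ k, c ≤ u k) :
    m * ∑ k ∈ univ.erase i, (u k - c) + T i i * (u i + c) ≤ (T *ᵥ u) i := by
  refine le_trans (add_le_add_left ?_ _) (sum_erase_mul_sub_add_le_mulVec hdom hc)
  rw [mul_sum]
  exact sum_le_sum fun k hk =>
    mul_le_mul_of_nonneg_right (hm k (ne_of_mem_erase hk).symm) (sub_nonneg.2 (hu k))

theorem max_add_min_nonpos [Nontrivial ι] {α p : ι} (hpos : ∀ k, 0 < T α k)
    (hdom : ∑ k ∈ univ.erase α, T α k ≤ T α α) (hTu : (T *ᵥ u) α ≤ 0)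
    (hα : ∀ k, u k ≤ u α) (hp : ∀ k, u p ≤ u k) : u α + u p ≤ 0 := by
  by_contra! h
  have hα0 : 0 ≤ u α := by linarith [hα p]
  have hsum : 0 < ∑ k ∈ univ.erase α, T α k * (u k - -u α) :=
    sum_pos (fun k _ => mul_pos (hpos k) (by linarith [hp k]))
      ((exists_ne α).imp fun k hk => mem_erase.2 ⟨hk, mem_univ k⟩)
  have := sum_erase_mul_sub_add_le_mulVec (u := u) hdom (neg_nonpos.2 hα0)
  simp only [add_neg_cancel, mul_zero, add_zero] at this
  linarith

theorem sum_erase_sub_sub_sum_erase_sub (u : ι → ℝ) (a b : ι) :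
    ∑ k ∈ univ.erase a, (u k - u b) - ∑ k ∈ univ.erase b, (u k - u a)
      = (Fintype.card ι - 2) * (u a - u b) := by
  simp only [sum_erase_eq_sub (mem_univ _), sum_sub_distrib, sum_const, card_univ, nsmul_eq_mul]
  ring

theorem two_mul_card_sub_two_mul_abs_le [Nontrivial ι] {d D W : ℝ} {j : ι}
    (hpos : ∀ i k, 0 < T i k) (hdom : ∀ i, ∑ k ∈ univ.erase i, T i k ≤ T i i) (hm0 : 0 ≤ m)
    (hm : ∀ i k, i ≠ k → m ≤ T i k) (hd : ∀ i, d ≤ T i i) (hD : ∀ i, T i i ≤ D)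
    (hW : ∀ i, -W ≤ (T *ᵥ u) i) (hTu : ∀ i, (T *ᵥ u) i ≤ 0) (hj : (T *ᵥ u) j = 0) (i : ι) :
    2 * m * (Fintype.card ι - 2) * d * |u i| ≤ W * (D + (Fintype.card ι - 2) * m) := by
  have hn2 : (0 : ℝ) ≤ Fintype.card ι - 2 :=
    sub_nonneg.2 (by exact_mod_cast (Fintype.one_lt_card (α := ι)))
  have hcoef : 0 ≤ 2 * m * (Fintype.card ι - 2) := mul_nonneg (mul_nonneg zero_le_two hm0) hn2
  have : Nonempty ι := ⟨j⟩
  obtain ⟨α, hα⟩ := Finite.exists_max u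
  obtain ⟨p, hp⟩ := Finite.exists_min u
  have hα0 : 0 ≤ u α := nonneg_of_isMax_of_mulVec_nonneg (hpos j) hj.ge hα
  have hαp : u α + u p ≤ 0 := max_add_min_nonpos (hpos α) (hdom α) (hTu α) hα hp
  have hrow_p := mulVec_le_of_forall_le (hdom p) (hm p) hα0 hα
  have hrow_α := le_mulVec_of_forall_ge (hdom α) (hm α) (by linarith) hp
  have hsum_p : ∑ k ∈ univ.erase p, (u k - u α) ≤ 0 :=
    sum_nonpos fun k _ => sub_nonpos.2 (hα k)
  have hmn : 0 ≤ (Fintype.card ι - 2) * m := mul_nonneg hn2 hm0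
  have hkey : 2 * m * (Fintype.card ι - 2) * -u p
      ≤ -(T *ᵥ u) p + (T α α + m * (Fintype.card ι - 2) - T p p) * -(u α + u p) := by
    linarith [hTu α, congrArg (m * ·) (sum_erase_sub_sub_sum_erase_sub u α p)]
  have hpp := mul_le_mul_of_le_add_sub_mul (B := D + (Fintype.card ι - 2) * m) (hpos p p).le
    (neg_nonneg.2 hαp) (by linarith [mul_nonpos_of_nonneg_of_nonpos hm0 hsum_p]) hkey
    (by linarith [hD p]) (by linarith [hD α])
  have hui : |u i| ≤ -u p := abs_le.2 ⟨by linarith [hp i], by linarith [hα i]⟩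
  calc 2 * m * (Fintype.card ι - 2) * d * |u i|
      ≤ 2 * m * (Fintype.card ι - 2) * T p p * |u i| := by gcongr; exact hd p
    _ ≤ 2 * m * (Fintype.card ι - 2) * T p p * -u p := by
      gcongr
      exact mul_nonneg hcoef (hpos p p).le
    _ = 2 * m * (Fintype.card ι - 2) * -u p * T p p := by ring
    _ ≤ -(T *ᵥ u) p * (D + (Fintype.card ι - 2) * m) := hpp
    _ ≤ W * (D + (Fintype.card ι - 2) * m) := by
      gcongr
      · linarith [hD p, hpos p p]
      · linarith [hW p]

end RowEstimates

theorem mulVec_col_inv_sub_diagonal_inv {ι K : Type*} [Fintype ι] [DecidableEq ι] [Field K]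
    {T : Matrix ι ι K} (hT : IsUnit T.det) {j : ι} (hj : T j j ≠ 0) (i : ι) :
    (T *ᵥ fun k => (T⁻¹ - diagonal fun k => (T k k)⁻¹) k j) i
      = if i = j then 0 else -(T i j / T j j) := by
  change (T * (T⁻¹ - diagonal fun k => (T k k)⁻¹)) i j = _
  rw [Matrix.mul_sub, mul_nonsing_inv T hT, Matrix.sub_apply, mul_diagonal, one_apply]
  split_ifs with h
  · rw [h, mul_inv_cancel₀ hj, sub_self]
  · rw [zero_sub, div_eq_mul_inv]

section OffDiagonalSums

variable {ι : Type*} [Fintype ι] [DecidableEq ι] {T : Matrix ι ι ℝ} {i : ι} {m M : ℝ}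

theorem card_sub_one_mul_le_diag (hdom : ∑ k ∈ univ.erase i, T i k ≤ T i i)
    (hm : ∀ k, i ≠ k → m ≤ T i k) : (Fintype.card ι - 1) * m ≤ T i i := by
  have := card_nsmul_le_sum (univ.erase i) (T i) m fun k hk => hm k (ne_of_mem_erase hk).symm
  rw [nsmul_eq_mul, card_erase_of_mem (mem_univ i), card_univ,
    Nat.cast_pred (Fintype.card_pos_iff.2 ⟨i⟩)] at this
  exact this.trans hdom

theorem diag_le_card_mul (hM : ∀ k, i ≠ k → T i k ≤ M)
    (hΔ : T i i - ∑ k ∈ univ.erase i, T i k ≤ M) : T i i ≤ Fintype.card ι * M := by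
  have := sum_le_card_nsmul (univ.erase i) (T i) M fun k hk => hM k (ne_of_mem_erase hk).symm
  rw [nsmul_eq_mul, card_erase_of_mem (mem_univ i), card_univ,
    Nat.cast_pred (Fintype.card_pos_iff.2 ⟨i⟩)] at this
  linarith

end OffDiagonalSums

theorem Capprox_le {n : ℕ} {m M : ℝ} (hn : 2 ≤ n) (hm : 0 ≤ m) (hM : 0 ≤ M) :
    Capprox n m M ≤ 2 * ((n : ℝ) - 2) * m / ((n : ℝ) * M + ((n : ℝ) - 2) * m) := by
  have hn2 : (0 : ℝ) ≤ n - 2 := sub_nonneg.2 (by exact_mod_cast hn)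
  have hn1 : (0 : ℝ) ≤ n - 1 := by linarith
  have : 0 ≤ ((n : ℝ) - 2) * M * m / ((((n : ℝ) - 2) * m + M) * (((n : ℝ) - 2) * m + 2 * M)) := by
    positivity
  have : 0 ≤ M / (m * ((n : ℝ) - 1)) := by positivity
  unfold Capprox
  linarith

theorem le_div_Capprox {n : ℕ} {m M x : ℝ} (hn : 3 ≤ n) (hm : 0 < m) (hM : 0 < M)
    (hC : 0 < Capprox n m M) (hx0 : 0 ≤ x)
    (hx : 2 * m * ((n : ℝ) - 2) * (((n : ℝ) - 1) * m) * x
      ≤ M / (((n : ℝ) - 1) * m) * ((n : ℝ) * M + ((n : ℝ) - 2) * m)) :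
    x ≤ M / (m ^ 2 * ((n : ℝ) - 1) ^ 2 * Capprox n m M) := by
  have hn' : (3 : ℝ) ≤ n := by exact_mod_cast hn
  have hB : 0 < (n : ℝ) * M + ((n : ℝ) - 2) * m := by nlinarith
  rw [div_mul_eq_mul_div, le_div_iff₀ (mul_pos (by linarith) hm)] at hx
  rw [le_div_iff₀ (mul_pos (mul_pos (pow_pos hm 2) (pow_pos (by linarith) 2)) hC)]
  calc x * (m ^ 2 * ((n : ℝ) - 1) ^ 2 * Capprox n m M)
      ≤ x * (m ^ 2 * ((n : ℝ) - 1) ^ 2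
        * (2 * ((n : ℝ) - 2) * m / ((n : ℝ) * M + ((n : ℝ) - 2) * m))) := by
        gcongr
        exact Capprox_le (by omega) hm.le hM.le
    _ ≤ M := by
      rw [← mul_div_assoc, ← mul_div_assoc, div_le_iff₀ hB]
      linarith

theorem stmt_0_general {n : ℕ} (hn : 3 ≤ n) (T : Matrix (Fin n) (Fin n) ℝ)
    (hinv : IsUnit T.det)
    (hpos : ∀ i j, 0 < T i j)
    (hdom : ∀ i, ∑ j ∈ Finset.univ.erase i, T i j ≤ T i i)
    (m M : ℝ) (Δ : Fin n → ℝ)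
    (hΔ : ∀ i, Δ i = T i i - ∑ j ∈ Finset.univ.erase i, T i j)
    (hm1 : ∀ i j, i ≠ j → m ≤ T i j)
    (hm2 : ∃ i j, i ≠ j ∧ T i j = m)
    (hM1 : ∀ i j, i ≠ j → T i j ≤ M)
    (hM2 : ∀ i, Δ i ≤ M)
    (hC : 0 < Capprox n m M) :
    ∀ i j, |(T⁻¹ - Matrix.diagonal fun k => (T k k)⁻¹) i j| ≤
      M / (m ^ 2 * ((n : ℝ) - 1) ^ 2 * Capprox n m M) := by
  intro i j
  obtain ⟨i₀, j₀, hne₀, hm₀⟩ := hm2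
  have hm : 0 < m := hm₀ ▸ hpos i₀ j₀
  have hM : 0 < M := hm.trans_le (hm₀ ▸ hM1 i₀ j₀ hne₀)
  have : Nontrivial (Fin n) := Fin.nontrivial_iff_two_le.2 (by omega)
  have hdiag_ge k : ((n : ℝ) - 1) * m ≤ T k k := by
    simpa using card_sub_one_mul_le_diag (hdom k) (hm1 k)
  have hdiag_le k : T k k ≤ n * M := by
    simpa using diag_le_card_mul (hM1 k) (hΔ k ▸ hM2 k)
  have hn1 : (0 : ℝ) < n - 1 := by
    have : (3 : ℝ) ≤ n := by exact_mod_cast hn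
    linarith
  have hdiag_pos : 0 < ((n : ℝ) - 1) * m := mul_pos hn1 hm
  set u := fun k => (T⁻¹ - diagonal fun k => (T k k)⁻¹) k j
  have hTu : ∀ k, (T *ᵥ u) k = if k = j then 0 else -(T k j / T j j) :=
    mulVec_col_inv_sub_diagonal_inv hinv (hpos j j).ne'
  have hTu_le k : (T *ᵥ u) k ≤ 0 := by
    rw [hTu]
    split_ifs
    exacts [le_rfl, neg_nonpos.2 (div_nonneg (hpos k j).le (hpos j j).le)]
  have hW k : -(M / (((n : ℝ) - 1) * m)) ≤ (T *ᵥ u) k := by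
    rw [hTu]
    split_ifs with hk
    · exact neg_nonpos.2 (div_nonneg hM.le hdiag_pos.le)
    · exact neg_le_neg (div_le_div₀ hM.le (hM1 k j hk) hdiag_pos (hdiag_ge j))
  have hbound := two_mul_card_sub_two_mul_abs_le hpos hdom hm.le hm1 hdiag_ge hdiag_le hW hTu_le
    (by simpa using hTu j) i
  simp only [Fintype.card_fin] at hbound
  exact le_div_Capprox hn hm hM hC (abs_nonneg _) hbound

theorem stmt_0 {n : ℕ} (hn : 3 ≤ n) (T : Matrix (Fin n) (Fin n) ℝ)
    (hinv : IsUnit T.det)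
    (hpos : ∀ i j, 0 < T i j)
    (hdom : ∀ i, ∑ j ∈ Finset.univ.erase i, T i j ≤ T i i)
    (m M : ℝ) (Δ : Fin n → ℝ)
    (hΔ : ∀ i, Δ i = T i i - ∑ j ∈ Finset.univ.erase i, T i j)
    (hm1 : ∀ i j, i ≠ j → m ≤ T i j)
    (hm2 : ∃ i j, i ≠ j ∧ T i j = m)
    (hM1 : ∀ i j, i ≠ j → T i j ≤ M)
    (hM2 : ∀ i, Δ i ≤ M)
    (hM3 : (∃ i j, i ≠ j ∧ T i j = M) ∨ (∃ i, Δ i = M))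
    (hC : 0 < Capprox n m M) :
    ∀ i j, |(T⁻¹ - Matrix.diagonal fun k => (T k k)⁻¹) i j| ≤
      M / (m ^ 2 * ((n : ℝ) - 1) ^ 2 * Capprox n m M) :=
  stmt_0_general hn T hinv hpos hdom m M Δ hΔ hm1 hm2 hM1 hM2 hC
end

section
/- Let n ≥ 3 and let T = (t_{i,j}) be a symmetric n×n real matrix with all entries positive such that t_{i,i} ≥ Σ_{j≠i} t_{i,j} for every row i. Then T is positive definite. -/
/-!
For symmetric `T`,
`2 xᵀTx = 2 ∑ᵢ (tᵢᵢ - ∑_{j ≠ i} tᵢⱼ) xᵢ² + ∑_{i ≠ j} tᵢⱼ (xᵢ + xⱼ)²`.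
Diagonal dominance makes the first sum nonnegative and positivity of the off-diagonal entries makes
the second one positive unless `xᵢ + xⱼ = 0` for all `i ≠ j`; among three distinct indices this
forces `xᵢ = -xⱼ = xₖ = -xᵢ`, hence `x = 0`.
-/

open Finset Matrix

variable {ι R : Type*} [Fintype ι]

lemma Matrix.IsSymm.sum_sum_mul_add_sq [CommRing R] {T : Matrix ι ι R} (hT : T.IsSymm)
    (x : ι → R) :
    ∑ i, ∑ j, T i j * (x i + x j) ^ 2 = 2 * ∑ i, (∑ j, T i j) * x i ^ 2 + 2 * (x ⬝ᵥ T *ᵥ x) := by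
  have hswap : ∑ i, ∑ j, T i j * x j ^ 2 = ∑ i, ∑ j, T i j * x i ^ 2 := by
    rw [sum_comm]
    simp_rw [hT.apply]
  calc ∑ i, ∑ j, T i j * (x i + x j) ^ 2
      = ∑ i, ∑ j, T i j * x i ^ 2 + ∑ i, ∑ j, T i j * x j ^ 2
          + 2 * ∑ i, x i * ∑ j, T i j * x j := by
        simp only [mul_sum, ← sum_add_distrib]
        exact sum_congr rfl fun i _ ↦ sum_congr rfl fun j _ ↦ by ring
    _ = 2 * ∑ i, (∑ j, T i j) * x i ^ 2 + 2 * (x ⬝ᵥ T *ᵥ x) := by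
        rw [hswap]
        simp only [mulVec, dotProduct, sum_mul]
        ring

lemma Matrix.IsSymm.two_mul_dotProduct_mulVec_eq [DecidableEq ι] [CommRing R] {T : Matrix ι ι R}
    (hT : T.IsSymm) (x : ι → R) :
    2 * (x ⬝ᵥ T *ᵥ x) = 2 * ∑ i, (T i i - ∑ j ∈ univ.erase i, T i j) * x i ^ 2
      + ∑ i, ∑ j ∈ univ.erase i, T i j * (x i + x j) ^ 2 := by
  calc 2 * (x ⬝ᵥ T *ᵥ x)
      = ∑ i, (∑ j, T i j * (x i + x j) ^ 2 - 2 * (∑ j, T i j) * x i ^ 2) := by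
        rw [sum_sub_distrib, hT.sum_sum_mul_add_sq, mul_sum]
        simp only [mul_assoc]
        ring
    _ = _ := by
        rw [mul_sum, ← sum_add_distrib]
        refine sum_congr rfl fun i _ ↦ ?_
        rw [sum_erase_eq_sub (mem_univ i), sum_erase_eq_sub (mem_univ i)]
        ring

lemma exists_ne_add_ne_zero_of_three_le_card [Ring R] [NoZeroDivisors R] [CharZero R]
    (hι : 3 ≤ Fintype.card ι) {x : ι → R} (hx : x ≠ 0) : ∃ a b, a ≠ b ∧ x a + x b ≠ 0 := by
  classical
  obtain ⟨i, hi⟩ := Function.ne_iff.mp hx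
  obtain ⟨j, k, hji, hki, hjk⟩ : ∃ j k, j ≠ i ∧ k ≠ i ∧ j ≠ k := by
    have : 1 < (univ.erase i).card := by rw [card_erase_of_mem (mem_univ i), card_univ]; omega
    obtain ⟨j, hj, k, hk, hjk⟩ := one_lt_card.mp this
    exact ⟨j, k, ne_of_mem_erase hj, ne_of_mem_erase hk, hjk⟩
  by_contra! h
  have hj : x j = -x i := eq_neg_of_add_eq_zero_right (h i j hji.symm)
  have hk : x k = -x i := eq_neg_of_add_eq_zero_right (h i k hki.symm)
  have hjk := h j k hjk
  rw [hj, hk, ← neg_add, neg_eq_zero, add_self_eq_zero] at hjk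
  exact hi hjk

lemma Matrix.IsSymm.dotProduct_mulVec_pos_of_diagDominant [DecidableEq ι] [CommRing R]
    [LinearOrder R] [IsStrictOrderedRing R] {T : Matrix ι ι R} (hT : T.IsSymm)
    (hι : 3 ≤ Fintype.card ι) (hpos : ∀ i j, i ≠ j → 0 < T i j)
    (hdom : ∀ i, ∑ j ∈ univ.erase i, T i j ≤ T i i) {x : ι → R} (hx : x ≠ 0) :
    0 < x ⬝ᵥ T *ᵥ x := by
  obtain ⟨a, b, hab, hxab⟩ := exists_ne_add_ne_zero_of_three_le_card hι hx
  have hdiag : 0 ≤ ∑ i, (T i i - ∑ j ∈ univ.erase i, T i j) * x i ^ 2 :=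
    sum_nonneg fun i _ ↦ mul_nonneg (sub_nonneg.2 (hdom i)) (sq_nonneg _)
  have hterm : ∀ i, ∀ j ∈ univ.erase i, 0 ≤ T i j * (x i + x j) ^ 2 := fun i j hj ↦
    mul_nonneg (hpos i j (ne_of_mem_erase hj).symm).le (sq_nonneg _)
  have hoff : 0 < ∑ i, ∑ j ∈ univ.erase i, T i j * (x i + x j) ^ 2 :=
    sum_pos' (fun i _ ↦ sum_nonneg (hterm i)) ⟨a, mem_univ a, sum_pos' (hterm a)
      ⟨b, mem_erase.2 ⟨hab.symm, mem_univ b⟩, mul_pos (hpos a b hab) (by positivity)⟩⟩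
  linarith [hT.two_mul_dotProduct_mulVec_eq x]

theorem stmt_2 {n : ℕ} (hn : 3 ≤ n) (T : Matrix (Fin n) (Fin n) ℝ)
    (hsymm : T.IsSymm)
    (hpos : ∀ i j, 0 < T i j)
    (hdom : ∀ i, ∑ j ∈ Finset.univ.erase i, T i j ≤ T i i) :
    T.PosDef := by
  refine .of_dotProduct_mulVec_pos (isHermitian_iff_isSymm.2 hsymm) fun x hx ↦ ?_
  simpa using hsymm.dotProduct_mulVec_pos_of_diagDominant (by simpa using hn)
    (fun i j _ ↦ hpos i j) hdom hx
end

section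
/- Let n ≥ 2 and let T = (t_{i,j}) be an n×n real matrix with positive entries satisfying t_{i,i} ≥ Σ_{j≠i} t_{i,j} for every row i, and let W = S·(I_n − T·S) where S is the diagonal matrix with S_{i,i} = 1/t_{i,i}. Then for all indices i, j, k: |w_{i,j}| ≤ M/(m²(n−1)²) and |w_{i,j} − w_{i,k}| ≤ M/(m²(n−1)²). -/
/-! Writing `d k = (T k k)⁻¹`, the entries of `W = S (I - T S)` are `w i j = d i (δ i j - t i j d j)`:
they vanish on the diagonal and equal `-t i j / (t i i t j j)` off it. Diagonal dominance gives
`t i i ≥ (n - 1) m`, so every entry lies in `[-M / (m (n - 1))², 0]`, and two numbers in an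
interval of that length differ by at most its length. -/

open Finset Matrix

theorem Matrix.diagonal_mul_one_sub_mul_diagonal_apply {ι R : Type*} [Fintype ι] [DecidableEq ι]
    [Ring R] (d : ι → R) (T : Matrix ι ι R) (i j : ι) :
    (diagonal d * (1 - T * diagonal d)) i j = d i * ((1 : Matrix ι ι R) i j - T i j * d j) := by
  rw [diagonal_mul, sub_apply, mul_diagonal]

section DiagonallyDominant

variable {ι : Type*} [Fintype ι] [DecidableEq ι] {T : Matrix ι ι ℝ} {m M : ℝ}

theorem card_sub_one_mul_le_sum_erase (i : ι) (hm : ∀ j, i ≠ j → m ≤ T i j) :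
    ((Fintype.card ι : ℝ) - 1) * m ≤ ∑ j ∈ univ.erase i, T i j := by
  have h := card_nsmul_le_sum (univ.erase i) (T i) m fun j hj => hm j (ne_of_mem_erase hj).symm
  rwa [card_erase_of_mem (mem_univ i), nsmul_eq_mul, card_univ,
    Nat.cast_sub (Fintype.card_pos_iff.2 ⟨i⟩), Nat.cast_one] at h

theorem diagonal_inv_mul_one_sub_mul_diagonal_inv_mem_Icc (hpos : ∀ i j, 0 < T i j)
    (hdom : ∀ i, ∑ j ∈ univ.erase i, T i j ≤ T i i) (hm0 : 0 < m)
    (hm : ∀ i j, i ≠ j → m ≤ T i j) (hM0 : 0 ≤ M) (hM : ∀ i j, i ≠ j → T i j ≤ M) (i j : ι) :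
    (diagonal (fun k => (T k k)⁻¹) * (1 - T * diagonal fun k => (T k k)⁻¹)) i j ∈
      Set.Icc (-(M / (m ^ 2 * ((Fintype.card ι : ℝ) - 1) ^ 2))) 0 := by
  rw [diagonal_mul_one_sub_mul_diagonal_apply]
  obtain rfl | hij := eq_or_ne i j
  · rw [one_apply_eq, mul_inv_cancel₀ (hpos i i).ne', sub_self, mul_zero]
    exact ⟨neg_nonpos.2 (by positivity), le_rfl⟩
  have hL : ∀ k, ((Fintype.card ι : ℝ) - 1) * m ≤ T k k := fun k =>
    (card_sub_one_mul_le_sum_erase k (hm k)).trans (hdom k)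
  have hcard : (1 : ℝ) < Fintype.card ι := by exact_mod_cast Fintype.one_lt_card_iff.2 ⟨i, j, hij⟩
  have hL0 : 0 < ((Fintype.card ι : ℝ) - 1) * m := mul_pos (by linarith) hm0
  have hbound : T i j / (T i i * T j j) ≤ M / (m ^ 2 * ((Fintype.card ι : ℝ) - 1) ^ 2) := by
    calc T i j / (T i i * T j j)
        ≤ M / ((((Fintype.card ι : ℝ) - 1) * m) * (((Fintype.card ι : ℝ) - 1) * m)) :=
          div_le_div₀ hM0 (hM i j hij) (by positivity)
            (mul_le_mul (hL i) (hL j) hL0.le (hpos i i).le)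
      _ = M / (m ^ 2 * ((Fintype.card ι : ℝ) - 1) ^ 2) := by ring
  have hentry : (T i i)⁻¹ * ((1 : Matrix ι ι ℝ) i j - T i j * (T j j)⁻¹) =
      -(T i j / (T i i * T j j)) := by
    rw [one_apply_ne hij]; ring
  rw [hentry]
  exact ⟨neg_le_neg hbound, neg_nonpos.2 (div_nonneg (hpos i j).le (mul_pos (hpos i i) (hpos j j)).le)⟩

end DiagonallyDominant

theorem stmt_6_general {n : ℕ} (T : Matrix (Fin n) (Fin n) ℝ)
    (hpos : ∀ i j, 0 < T i j)
    (hdom : ∀ i, ∑ j ∈ Finset.univ.erase i, T i j ≤ T i i)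
    (m M : ℝ) (Δ : Fin n → ℝ)
    (hΔ : ∀ i, Δ i = T i i - ∑ j ∈ Finset.univ.erase i, T i j)
    (hm1 : ∀ i j, i ≠ j → m ≤ T i j)
    (hm2 : ∃ i j, i ≠ j ∧ T i j = m)
    (hM1 : ∀ i j, i ≠ j → T i j ≤ M)
    (hM2 : ∀ i, Δ i ≤ M)
    (S W : Matrix (Fin n) (Fin n) ℝ)
    (hS : S = Matrix.diagonal fun k => (T k k)⁻¹)
    (hW : W = S * (1 - T * S)) :
    ∀ i j k, |W i j| ≤ M / (m ^ 2 * ((n : ℝ) - 1) ^ 2) ∧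
      |W i j - W i k| ≤ M / (m ^ 2 * ((n : ℝ) - 1) ^ 2) := by
  intro i j k
  have hm0 : 0 < m := by
    obtain ⟨a, b, -, rfl⟩ := hm2
    exact hpos a b
  have hM0 : 0 ≤ M := (sub_nonneg.2 (hdom i)).trans ((hΔ i).symm.le.trans (hM2 i))
  have hmem : ∀ l, W i l ∈ Set.Icc (-(M / (m ^ 2 * ((n : ℝ) - 1) ^ 2))) 0 := fun l => by
    simpa [hW, hS] using
      diagonal_inv_mul_one_sub_mul_diagonal_inv_mem_Icc hpos hdom hm0 hm1 hM0 hM1 i l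
  exact ⟨abs_le.2 ⟨(hmem j).1, by linarith [(hmem j).1, (hmem j).2]⟩,
    (Real.dist_le_of_mem_Icc (hmem j) (hmem k)).trans_eq (by ring)⟩

theorem stmt_6 {n : ℕ} (hn : 2 ≤ n) (T : Matrix (Fin n) (Fin n) ℝ)
    (hpos : ∀ i j, 0 < T i j)
    (hdom : ∀ i, ∑ j ∈ Finset.univ.erase i, T i j ≤ T i i)
    (m M : ℝ) (Δ : Fin n → ℝ)
    (hΔ : ∀ i, Δ i = T i i - ∑ j ∈ Finset.univ.erase i, T i j)
    (hm1 : ∀ i j, i ≠ j → m ≤ T i j)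
    (hm2 : ∃ i j, i ≠ j ∧ T i j = m)
    (hM1 : ∀ i j, i ≠ j → T i j ≤ M)
    (hM2 : ∀ i, Δ i ≤ M)
    (hM3 : (∃ i j, i ≠ j ∧ T i j = M) ∨ (∃ i, Δ i = M))
    (S W : Matrix (Fin n) (Fin n) ℝ)
    (hS : S = Matrix.diagonal fun k => (T k k)⁻¹)
    (hW : W = S * (1 - T * S)) :
    ∀ i j k, |W i j| ≤ M / (m ^ 2 * ((n : ℝ) - 1) ^ 2) ∧
      |W i j - W i k| ≤ M / (m ^ 2 * ((n : ℝ) - 1) ^ 2) :=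
  stmt_6_general T hpos hdom m M Δ hΔ hm1 hm2 hM1 hM2 S W hS hW
end

section
/- Let T = (t_{i,j}) be an invertible n×n real matrix with all entries positive, let S be the diagonal matrix with S_{i,i} = 1/t_{i,i}, and set F = T^{-1} − S. Then for every fixed index i, min_{1≤k≤n} f_{i,k} ≤ 0 and max_{1≤k≤n} f_{i,k} ≥ 0. -/
theorem stmt_8 {n : ℕ} (hn : 0 < n) (T : Matrix (Fin n) (Fin n) ℝ)
    (hinv : IsUnit T.det)
    (hpos : ∀ i j, 0 < T i j)
    (S F : Matrix (Fin n) (Fin n) ℝ)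
    (hS : S = Matrix.diagonal fun k => (T k k)⁻¹)
    (hF : F = T⁻¹ - S) :
    ∀ i, Finset.univ.inf' ⟨⟨0, hn⟩, Finset.mem_univ _⟩ (fun k => F i k) ≤ 0 ∧
      0 ≤ Finset.univ.sup' ⟨⟨0, hn⟩, Finset.mem_univ _⟩ (fun k => F i k) := by
  intro i
  have hTi : T⁻¹ * T = 1 := Matrix.nonsing_inv_mul T hinv
  have h1 : ∑ k, T⁻¹ i k * T k i = 1 := by
    have := congrFun (congrFun hTi i) i
    simpa [Matrix.mul_apply, Matrix.one_apply] using this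
  have h2 : ∑ k, S i k * T k i = 1 := by
    subst hS
    simp [Matrix.diagonal_apply, Finset.sum_ite_eq',
      inv_mul_cancel₀ (ne_of_gt (hpos i i))]
  have hsum : ∑ k, F i k * T k i = 0 := by
    subst hF
    simp [Matrix.sub_apply, sub_mul, Finset.sum_sub_distrib, h1, h2]
  constructor
  · by_contra h
    push_neg at h
    have hpos' : 0 < ∑ k, F i k * T k i :=
      Finset.sum_pos (fun k _ => mul_pos
        (lt_of_lt_of_le h (Finset.inf'_le _ (Finset.mem_univ k))) (hpos k i))
        ⟨⟨0, hn⟩, Finset.mem_univ _⟩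
    linarith
  · by_contra h
    push_neg at h
    have hneg : ∑ k, F i k * T k i < 0 :=
      Finset.sum_neg (fun k _ => mul_neg_of_neg_of_pos
        (lt_of_le_of_lt (Finset.le_sup' _ (Finset.mem_univ k)) h) (hpos k i))
        ⟨⟨0, hn⟩, Finset.mem_univ _⟩
    linarith
end

section
/- Let n ≥ 3 and 0 < m ≤ M < ∞ with m < M, and define f(λ) = λM/(λM + (n−1−λ)m) − (λ−1)m/((λ−1)m + (n−λ)M) for real λ ∈ [1, n−1]. Then f is twice differentiable on (1, n−1) with f''(λ) ≤ 0 there (f is concave on [1, n−1]), and f attains its maximum over [1, n−1] at λ = n/2, where f(n/2) = (nM − (n−2)m)/(nM + (n−2)m). -/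
/-!
With `D l = (M - m) * l + (n - 1) * m` we have `f l = M * (g l + g (n - l)) - 1` for
`g l = l / D l`, since the second denominator is `D (n - l)` and its numerator is
`D (n - l) - M * (n - l)`. The Möbius map `g` has `g'' = -2 (M - m) (n - 1) m / D³ ≤ 0` where
`D > 0`, so `f` is concave on `(0, n)`, and it is symmetric under `l ↦ n - l`; a concave function
symmetric about `n / 2` is maximal there.
-/

open Set Filter Topology

theorem hasDerivAt_div_affine {a b x : ℝ} (hx : a * x + b ≠ 0) :
    HasDerivAt (fun y => y / (a * y + b)) (b / (a * x + b) ^ 2) x := by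
  have hd : HasDerivAt (fun y => a * y + b) a x := by
    simpa using ((hasDerivAt_id x).const_mul a).add_const b
  refine ((hasDerivAt_id' x).fun_div hd hx).congr_deriv ?_
  ring

theorem hasDerivAt_const_div_affine_sq {a b x : ℝ} (c : ℝ) (hx : a * x + b ≠ 0) :
    HasDerivAt (fun y => c / (a * y + b) ^ 2) (-(2 * a * c) / (a * x + b) ^ 3) x := by
  have hd : HasDerivAt (fun y => a * y + b) a x := by
    simpa using ((hasDerivAt_id x).const_mul a).add_const b
  refine ((hasDerivAt_const x c).fun_div (hd.fun_pow 2) (pow_ne_zero 2 hx)).congr_deriv ?_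
  field_simp
  ring

theorem HasDerivAt.add_comp_const_sub {φ : ℝ → ℝ} {d₁ d₂ c x : ℝ} (h₁ : HasDerivAt φ d₁ x)
    (h₂ : HasDerivAt φ d₂ (c - x)) : HasDerivAt (fun y => φ y + φ (c - y)) (d₁ - d₂) x := by
  simpa only [sub_eq_add_neg] using h₁.fun_add (h₂.comp_const_sub c x)

theorem HasDerivAt.sub_comp_const_sub {φ : ℝ → ℝ} {d₁ d₂ c x : ℝ} (h₁ : HasDerivAt φ d₁ x)
    (h₂ : HasDerivAt φ d₂ (c - x)) : HasDerivAt (fun y => φ y - φ (c - y)) (d₁ + d₂) x := by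
  simpa only [sub_neg_eq_add] using h₁.fun_sub (h₂.comp_const_sub c x)

theorem deriv_deriv_eq_of_eventually_hasDerivAt {f f' : ℝ → ℝ} {f'' x : ℝ}
    (hf : ∀ᶠ y in 𝓝 x, HasDerivAt f (f' y) y) (hf' : HasDerivAt f' f'' x) :
    deriv (deriv f) x = f'' := by
  rw [Filter.EventuallyEq.deriv_eq (hf.mono fun y hy => hy.deriv)]
  exact hf'.deriv

theorem ConcaveOn.isMaxOn_half_of_symmetric {f : ℝ → ℝ} {s : Set ℝ} {c : ℝ}
    (hf : ConcaveOn ℝ s f) (hs : ∀ x ∈ s, c - x ∈ s) (hsymm : ∀ x ∈ s, f (c - x) = f x) :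
    IsMaxOn f s (c / 2) := fun x hx =>
  calc f x = (1 / 2 : ℝ) • f x + (1 / 2 : ℝ) • f (c - x) := by
          rw [hsymm x hx, smul_eq_mul]; ring
    _ ≤ f ((1 / 2 : ℝ) • x + (1 / 2 : ℝ) • (c - x)) :=
          hf.2 hx (hs x hx) (by norm_num) (by norm_num) (by norm_num)
    _ = f (c / 2) := by rw [smul_eq_mul, smul_eq_mul]; ring_nf

noncomputable def gap (m M N l : ℝ) : ℝ :=
  l * M / (l * M + (N - 1 - l) * m) - (l - 1) * m / ((l - 1) * m + (N - l) * M)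

noncomputable def gapDeriv (m M N x : ℝ) : ℝ :=
  M * ((N - 1) * m / ((M - m) * x + (N - 1) * m) ^ 2
    - (N - 1) * m / ((M - m) * (N - x) + (N - 1) * m) ^ 2)

noncomputable def gapDeriv2 (m M N x : ℝ) : ℝ :=
  M * (-(2 * (M - m) * ((N - 1) * m)) / ((M - m) * x + (N - 1) * m) ^ 3
    + -(2 * (M - m) * ((N - 1) * m)) / ((M - m) * (N - x) + (N - 1) * m) ^ 3)

section

variable {m M N : ℝ} (hm : 0 < m) (hmM : m ≤ M) (hN : 1 < N)
include hm hmM hN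

theorem gap_denom_pos {l : ℝ} (hl : 0 < l) : 0 < (M - m) * l + (N - 1) * m :=
  add_pos_of_nonneg_of_pos (mul_nonneg (sub_nonneg.2 hmM) hl.le) (mul_pos (sub_pos.2 hN) hm)

theorem eqOn_gap : EqOn (gap m M N)
    (fun l => M * (l / ((M - m) * l + (N - 1) * m)
      + (N - l) / ((M - m) * (N - l) + (N - 1) * m)) - 1) (Ioo 0 N) := by
  intro l hl
  have h₂ := (gap_denom_pos hm hmM hN (sub_pos.2 hl.2)).ne'
  have h₂' : (l - 1) * m / ((M - m) * (N - l) + (N - 1) * m)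
      = 1 - M * ((N - l) / ((M - m) * (N - l) + (N - 1) * m)) := by
    rw [eq_sub_iff_add_eq, mul_div_assoc', ← add_div, div_eq_one_iff_eq h₂]
    ring
  rw [gap, show l * M + (N - 1 - l) * m = (M - m) * l + (N - 1) * m by ring,
    show (l - 1) * m + (N - l) * M = (M - m) * (N - l) + (N - 1) * m by ring, h₂']
  ring

theorem gap_sub_eq {l : ℝ} (hl : l ∈ Ioo 0 N) : gap m M N (N - l) = gap m M N l := by
  have hl' : N - l ∈ Ioo 0 N := ⟨sub_pos.2 hl.2, sub_lt_self N hl.1⟩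
  rw [eqOn_gap hm hmM hN hl, eqOn_gap hm hmM hN hl']
  dsimp only
  rw [sub_sub_cancel, add_comm]

theorem hasDerivAt_gap {x : ℝ} (hx : x ∈ Ioo 0 N) :
    HasDerivAt (gap m M N) (gapDeriv m M N x) x := by
  have h₁ := (gap_denom_pos hm hmM hN hx.1).ne'
  have h₂ := (gap_denom_pos hm hmM hN (sub_pos.2 hx.2)).ne'
  exact (((hasDerivAt_div_affine h₁).add_comp_const_sub (hasDerivAt_div_affine h₂)).const_mul M
    |>.sub_const 1).congr_of_eventuallyEq
    (eventuallyEq_of_mem (isOpen_Ioo.mem_nhds hx) (eqOn_gap hm hmM hN))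

theorem hasDerivAt_gapDeriv {x : ℝ} (hx : x ∈ Ioo 0 N) :
    HasDerivAt (gapDeriv m M N) (gapDeriv2 m M N x) x := by
  have h₁ := (gap_denom_pos hm hmM hN hx.1).ne'
  have h₂ := (gap_denom_pos hm hmM hN (sub_pos.2 hx.2)).ne'
  exact ((hasDerivAt_const_div_affine_sq _ h₁).sub_comp_const_sub
    (hasDerivAt_const_div_affine_sq _ h₂)).const_mul M

theorem gapDeriv2_nonpos {x : ℝ} (hx : x ∈ Ioo 0 N) : gapDeriv2 m M N x ≤ 0 := by
  have h₁ := gap_denom_pos hm hmM hN hx.1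
  have h₂ := gap_denom_pos hm hmM hN (sub_pos.2 hx.2)
  have hk : 0 ≤ 2 * (M - m) * ((N - 1) * m) :=
    mul_nonneg (mul_nonneg zero_le_two (sub_nonneg.2 hmM)) (mul_pos (sub_pos.2 hN) hm).le
  rw [gapDeriv2, neg_div, neg_div, ← neg_add, mul_neg, neg_nonpos]
  exact mul_nonneg (hm.le.trans hmM)
    (add_nonneg (div_nonneg hk (pow_pos h₁ 3).le) (div_nonneg hk (pow_pos h₂ 3).le))

theorem deriv_deriv_gap {x : ℝ} (hx : x ∈ Ioo 0 N) :
    deriv (deriv (gap m M N)) x = gapDeriv2 m M N x :=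
  deriv_deriv_eq_of_eventually_hasDerivAt
    (eventually_of_mem (isOpen_Ioo.mem_nhds hx) fun _ hy => hasDerivAt_gap hm hmM hN hy)
    (hasDerivAt_gapDeriv hm hmM hN hx)

theorem contDiffAt_gap {x : ℝ} (hx : x ∈ Ioo 0 N) : ContDiffAt ℝ 2 (gap m M N) x := by
  have h₁ := (gap_denom_pos hm hmM hN hx.1).ne'
  have h₂ := (gap_denom_pos hm hmM hN (sub_pos.2 hx.2)).ne'
  refine ContDiffAt.congr_of_eventuallyEq ?_
    (eventuallyEq_of_mem (isOpen_Ioo.mem_nhds hx) (eqOn_gap hm hmM hN))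
  fun_prop (disch := assumption)

theorem concaveOn_gap : ConcaveOn ℝ (Ioo 0 N) (gap m M N) := by
  refine concaveOn_of_hasDerivWithinAt2_nonpos (f' := gapDeriv m M N) (f'' := gapDeriv2 m M N)
    (convex_Ioo 0 N)
    (fun x hx => (hasDerivAt_gap hm hmM hN hx).continuousAt.continuousWithinAt) ?_ ?_ ?_ <;>
    rw [interior_Ioo]
  · exact fun x hx => (hasDerivAt_gap hm hmM hN hx).hasDerivWithinAt
  · exact fun x hx => (hasDerivAt_gapDeriv hm hmM hN hx).hasDerivWithinAt
  · exact fun x hx => gapDeriv2_nonpos hm hmM hN hx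

theorem gap_half : gap m M N (N / 2) = (N * M - (N - 2) * m) / (N * M + (N - 2) * m) := by
  have hhalf : N / 2 ∈ Ioo 0 N := ⟨by linarith, by linarith⟩
  have hD : (M - m) * (N / 2) + (N - 1) * m = (N * M + (N - 2) * m) / 2 := by ring
  have hX : N * M + (N - 2) * m ≠ 0 := by
    have := gap_denom_pos hm hmM hN hhalf.1
    linarith
  rw [eqOn_gap hm hmM hN hhalf]
  dsimp only
  rw [sub_half, hD, div_div_div_cancel_right₀ two_ne_zero, ← add_div, mul_div_assoc',
    div_sub_one hX]
  ring

end

theorem stmt_10 {n : ℕ} (hn : 3 ≤ n) (m M : ℝ) (hm : 0 < m) (hmM : m < M)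
    (f : ℝ → ℝ)
    (hf : ∀ l : ℝ, f l = l * M / (l * M + ((n : ℝ) - 1 - l) * m)
      - (l - 1) * m / ((l - 1) * m + ((n : ℝ) - l) * M)) :
    (∀ x ∈ Set.Ioo (1 : ℝ) ((n : ℝ) - 1),
        ContDiffAt ℝ 2 f x ∧ deriv (deriv f) x ≤ 0) ∧
    ConcaveOn ℝ (Set.Icc (1 : ℝ) ((n : ℝ) - 1)) f ∧
    IsMaxOn f (Set.Icc (1 : ℝ) ((n : ℝ) - 1)) ((n : ℝ) / 2) ∧
    f ((n : ℝ) / 2) = ((n : ℝ) * M - ((n : ℝ) - 2) * m) / ((n : ℝ) * M + ((n : ℝ) - 2) * m) := by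
  have hN : (1 : ℝ) < n := by exact_mod_cast (by omega : 1 < n)
  obtain rfl : f = gap m M n := funext hf
  have hsub : Icc (1 : ℝ) (n - 1) ⊆ Ioo 0 n := fun x hx => ⟨by linarith [hx.1], by linarith [hx.2]⟩
  have hconcave := (concaveOn_gap hm hmM.le hN).subset hsub (convex_Icc _ _)
  refine ⟨fun x hx => ?_, hconcave, ?_, gap_half hm hmM.le hN⟩
  · have hx' := hsub (Ioo_subset_Icc_self hx)
    exact ⟨contDiffAt_gap hm hmM.le hN hx',
      (deriv_deriv_gap hm hmM.le hN hx').trans_le (gapDeriv2_nonpos hm hmM.le hN hx')⟩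
  · exact hconcave.isMaxOn_half_of_symmetric
      (fun x hx => ⟨by linarith [hx.2], by linarith [hx.1]⟩)
      (fun x hx => gap_sub_eq hm hmM.le hN (hsub hx))
end

section
/- Let n ≥ 3 and 0 < m ≤ M be real numbers. Then for every real λ ∈ [1, n−1], λM/(λM + (n−1−λ)m) − (λ−1)m/((λ−1)m + (n−λ)M + M) ≤ (nM − (n−2)m)/(nM + (n−2)m) + (n−2)Mm/([(n−2)m+M][(n−2)m+2M]). -/
/-!
Put `k = n - 2`, `u = l - 1`. Both sides are `1 - m * S` for sums `S`, and the claim becomes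
`S_right ≤ S_left(u)` with `S_left(u) = (k - u) / D₁ + u / D₂`. By the Engel form of
Cauchy–Schwarz, `S_left(u) ≥ k² / ((k - u) D₁ + u D₂)`, and the weighted denominator is at most
`k (k (m + M) + 4M) / 2` for every `u` (it is a concave quadratic in `u` when `m ≤ M`), so
`S_left(u) ≥ 2k / (k (m + M) + 4M)`, which already dominates `S_right`.
-/

theorem sq_add_div_le_div_add_div {K : Type*} [Field K] [LinearOrder K] [IsStrictOrderedRing K]
    {p q x y : K} (hp : 0 ≤ p) (hq : 0 ≤ q) (hx : 0 < x) (hy : 0 < y) :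
    (p + q) ^ 2 / (p * x + q * y) ≤ p / x + q / y := by
  rcases (by positivity : 0 ≤ p * x + q * y).eq_or_lt with h | h
  · rw [← h, div_zero]
    positivity
  · rw [div_add_div _ _ hx.ne' hy.ne', div_le_div_iff₀ h (mul_pos hx hy)]
    nlinarith [mul_nonneg (mul_nonneg hp hq) (sq_nonneg (x - y))]

section

variable {a b k u : ℝ}

theorem two_mul_weighted_denominators_le (ha : 0 ≤ a) (hab : a ≤ b) (huk : u ≤ k) :
    2 * ((k - u) * ((u + 1) * b + (k - u) * a) + u * (u * a + (k - u + 2) * b))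
      ≤ k * (k * (a + b) + 4 * b) := by
  -- the gap is `(b - a) (k - 2u)² + 2b (k - u)`
  nlinarith [mul_nonneg (sub_nonneg.2 hab) (sq_nonneg (k - 2 * u)),
    mul_nonneg (ha.trans hab) (sub_nonneg.2 huk)]

theorem two_mul_div_sub_div_le (hk : 0 < k) (ha : 0 < a) (hab : a ≤ b) :
    2 * k / ((k + 2) * b + k * a) - k * b / ((k * a + b) * (k * a + 2 * b))
      ≤ 2 * k / (k * (a + b) + 4 * b) := by
  have hb : 0 < b := ha.trans_le hab
  rw [sub_le_iff_le_add, div_add_div _ _ (by positivity) (by positivity),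
    div_le_div_iff₀ (by positivity) (by positivity)]
  nlinarith [mul_nonneg (mul_nonneg (mul_nonneg hk.le hb.le) (mul_nonneg hk.le (sub_nonneg.2 hab)))
    (by positivity : (0 : ℝ) ≤ 3 * (k * a) + (k + 6) * b)]

theorem two_mul_div_sub_div_le_div_add_div (hk : 0 < k) (ha : 0 < a) (hab : a ≤ b)
    (hu : 0 ≤ u) (huk : u ≤ k) :
    2 * k / ((k + 2) * b + k * a) - k * b / ((k * a + b) * (k * a + 2 * b))
      ≤ (k - u) / ((u + 1) * b + (k - u) * a) + u / (u * a + (k - u + 2) * b) := by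
  have hb : 0 < b := ha.trans_le hab
  have hku : 0 ≤ k - u := sub_nonneg.2 huk
  set X := (k - u) * ((u + 1) * b + (k - u) * a) + u * (u * a + (k - u + 2) * b)
  have hX : 0 < X := by
    nlinarith [mul_nonneg (sub_nonneg.2 hab) (mul_nonneg hu hku), mul_pos ha (mul_pos hk hk),
      mul_nonneg hb.le (add_nonneg hk.le hu)]
  calc _ ≤ 2 * k / (k * (a + b) + 4 * b) := two_mul_div_sub_div_le hk ha hab
    _ = k ^ 2 / (k * (k * (a + b) + 4 * b) / 2) := by field_simp
    _ ≤ k ^ 2 / X := by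
        gcongr
        linarith [two_mul_weighted_denominators_le (k := k) ha.le hab huk]
    _ = (k - u + u) ^ 2 / X := by rw [sub_add_cancel]
    _ ≤ _ := sq_add_div_le_div_add_div hku hu (by positivity) (by positivity)

end

theorem shifted_inequality {k u m M : ℝ} (hk : 0 < k) (hm : 0 < m) (hmM : m ≤ M)
    (hu : 0 ≤ u) (huk : u ≤ k) :
    (u + 1) * M / ((u + 1) * M + (k - u) * m) - u * m / (u * m + (k - u + 2) * M)
      ≤ ((k + 2) * M - k * m) / ((k + 2) * M + k * m)
        + k * M * m / ((k * m + M) * (k * m + 2 * M)) := by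
  have hM : 0 < M := hm.trans_le hmM
  have hD₁ : 0 < (u + 1) * M + (k - u) * m := by nlinarith
  have hD₂ : 0 < u * m + (k - u + 2) * M := by nlinarith
  have left_eq : (u + 1) * M / ((u + 1) * M + (k - u) * m) - u * m / (u * m + (k - u + 2) * M)
      = 1 - m * ((k - u) / ((u + 1) * M + (k - u) * m) + u / (u * m + (k - u + 2) * M)) := by
    field_simp
    ring
  have right_eq : ((k + 2) * M - k * m) / ((k + 2) * M + k * m)
        + k * M * m / ((k * m + M) * (k * m + 2 * M))
      = 1 - m * (2 * k / ((k + 2) * M + k * m) - k * M / ((k * m + M) * (k * m + 2 * M))) := by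
    field_simp
    ring
  rw [left_eq, right_eq]
  exact sub_le_sub_left (mul_le_mul_of_nonneg_left
    (two_mul_div_sub_div_le_div_add_div hk hm hmM hu huk) hm.le) 1

theorem stmt_12 {n : ℕ} (hn : 3 ≤ n) (m M : ℝ) (hm : 0 < m) (hmM : m ≤ M) :
    ∀ l ∈ Set.Icc (1 : ℝ) ((n : ℝ) - 1),
      l * M / (l * M + ((n : ℝ) - 1 - l) * m)
        - (l - 1) * m / ((l - 1) * m + ((n : ℝ) - l) * M + M)
      ≤ ((n : ℝ) * M - ((n : ℝ) - 2) * m) / ((n : ℝ) * M + ((n : ℝ) - 2) * m)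
        + ((n : ℝ) - 2) * M * m / ((((n : ℝ) - 2) * m + M) * (((n : ℝ) - 2) * m + 2 * M)) := by
  rintro l ⟨hl₁, hl₂⟩
  have hn₃ : (3 : ℝ) ≤ n := by exact_mod_cast hn
  generalize (n : ℝ) = N at hn₃ hl₂ ⊢
  obtain ⟨k, rfl⟩ : ∃ k, N = k + 2 := ⟨N - 2, by ring⟩
  obtain ⟨u, rfl⟩ : ∃ u, l = u + 1 := ⟨l - 1, by ring⟩
  rw [show k + 2 - 1 - (u + 1) = k - u by ring, add_sub_cancel_right, add_sub_cancel_right,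
    show u * m + (k + 2 - (u + 1)) * M + M = u * m + (k - u + 2) * M by ring]
  exact shifted_inequality (by linarith) hm hmM (by linarith) (by linarith)
end

section
/- There exists an absolute constant K > 0 such that for all integers n ≥ 3 and all real numbers M ≥ m > 0, the matrix T with t_{i,i} = (n−1)M for i = 1,…,n−1, t_{n,n} = (n−1)m, and t_{i,j} = m for all i ≠ j satisfies max_{i,j} |(T^{-1} − S)_{i,j}| ≤ K/((n−1)² m), where S is the diagonal matrix with S_{i,i} = 1/t_{i,i}. -/
/-!
Write `T = D + m J` with `D` diagonal, `D k k = t_{k,k} - m ≥ (n - 2) m`, and `J` the all-ones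
matrix. By Sherman–Morrison, `T⁻¹ = D⁻¹ - m / (1 + m ∑ₖ 1 / D k k) · (1 / (D p p · D q q))_{p,q}`,
and `1 / D p p - 1 / t_{p,p} = m / (D p p · t_{p,p})`. Hence every entry of `T⁻¹ - S` is a
difference of two numbers in `[0, m / ((n - 2) m) ^ 2]`, and `(n - 1) ≤ 2 (n - 2)` for `n ≥ 3`.
-/

noncomputable def exampleT (n : ℕ) (m M : ℝ) : Matrix (Fin n) (Fin n) ℝ :=
  Matrix.of fun i j =>
    if i = j then (if (i : ℕ) = n - 1 then ((n : ℝ) - 1) * m else ((n : ℝ) - 1) * M)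
    else m

open Matrix Finset

section DiagonalAddConst

variable {ι : Type*} [Fintype ι] [DecidableEq ι]

theorem inv_diagonal_add_const {K : Type*} [Field K] (a : ι → K) (m : K) (ha : ∀ k, a k ≠ 0)
    (hc : 1 + m * ∑ k, (a k)⁻¹ ≠ 0) :
    (diagonal a + of fun _ _ => m)⁻¹ =
      diagonal (fun k => (a k)⁻¹) - of fun p q => m / ((1 + m * ∑ k, (a k)⁻¹) * a p * a q) := by
  set s := ∑ k, (a k)⁻¹ with hs
  set c := 1 + m * s
  have hsum (q : ι) : ∑ k, m * (m / (c * a k * a q)) = m ^ 2 / (c * a q) * s := by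
    rw [hs, Finset.mul_sum]
    exact Finset.sum_congr rfl fun k _ => by field_simp [ha k]
  apply inv_eq_right_inv
  rw [Matrix.add_mul, Matrix.mul_sub, Matrix.mul_sub, diagonal_mul_diagonal]
  simp only [mul_inv_cancel₀ (ha _), diagonal_one]
  ext p q
  simp only [Matrix.add_apply, Matrix.sub_apply, diagonal_mul, mul_diagonal, of_apply]
  simp only [mul_apply, of_apply, hsum]
  field_simp [ha p, ha q]
  ring

theorem abs_inv_diagonal_add_const_sub_le (a : ι → ℝ) {m b : ℝ} (hm : 0 ≤ m) (hb : 0 < b)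
    (hab : ∀ k, b ≤ a k) (p q : ι) :
    |((diagonal a + of fun _ _ => m)⁻¹ -
        diagonal fun k => ((diagonal a + of fun _ _ => m : Matrix ι ι ℝ) k k)⁻¹) p q| ≤
      m / b ^ 2 := by
  have ha (k : ι) : 0 < a k := hb.trans_le (hab k)
  have hc : 1 ≤ 1 + m * ∑ k, (a k)⁻¹ :=
    le_add_of_nonneg_right (mul_nonneg hm (sum_nonneg fun k _ => (inv_pos.2 (ha k)).le))
  have hcorr (p q : ι) : m / ((1 + m * ∑ k, (a k)⁻¹) * a p * a q) ≤ m / b ^ 2 :=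
    div_le_div_of_nonneg_left hm (by positivity) (by
      nlinarith [mul_le_mul (hab p) (hab q) hb.le (ha p).le, mul_pos (ha p) (ha q)])
  rw [inv_diagonal_add_const a m (fun k => (ha k).ne') (by positivity)]
  rcases eq_or_ne p q with rfl | hpq
  · have hap := ha p
    have hdiag : (a p)⁻¹ - (a p + m)⁻¹ ≤ m / b ^ 2 := calc
      (a p)⁻¹ - (a p + m)⁻¹ = m / (a p * (a p + m)) := by
        rw [inv_sub_inv (ha p).ne' (by positivity), add_sub_cancel_left]
      _ ≤ m / b ^ 2 := div_le_div_of_nonneg_left hm (by positivity) (by nlinarith [hab p])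
    simp only [Matrix.sub_apply, Matrix.add_apply, diagonal_apply_eq, of_apply]
    rw [sub_right_comm]
    exact abs_sub_le_of_nonneg_of_le (sub_nonneg.2 (inv_anti₀ (ha p) (by linarith))) hdiag
      (by positivity) (hcorr p p)
  · simpa [hpq, abs_div, abs_of_nonneg hm, abs_of_pos (ha _), abs_of_pos (zero_lt_one.trans_le hc)]
      using hcorr p q

end DiagonalAddConst

theorem exampleT_eq_diagonal_add_const (n : ℕ) (m M : ℝ) :
    exampleT n m M = diagonal (fun k => exampleT n m M k k - m) + of fun _ _ => m := by
  ext i j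
  rcases eq_or_ne i j with rfl | hij
  · simp
  · simp [exampleT, hij]

theorem le_exampleT_diag_sub {n : ℕ} {m M : ℝ} (hmM : m ≤ M) (k : Fin n) :
    ((n : ℝ) - 2) * m ≤ exampleT n m M k k - m := by
  have hn : (1 : ℝ) ≤ n := by exact_mod_cast k.pos
  by_cases hk : (k : ℕ) = n - 1
  · simp only [exampleT, of_apply, ↓reduceIte, hk]
    linarith
  · simp only [exampleT, of_apply, ↓reduceIte, hk]
    nlinarith

theorem stmt_16 :
    ∃ K : ℝ, 0 < K ∧ ∀ n : ℕ, 3 ≤ n → ∀ m M : ℝ, 0 < m → m ≤ M →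
      ∀ i j : Fin n,
        |((exampleT n m M)⁻¹ - Matrix.diagonal fun k => (exampleT n m M k k)⁻¹) i j|
          ≤ K / (((n : ℝ) - 1) ^ 2 * m) := by
  refine ⟨4, by norm_num, fun n hn m M hm hmM i j => ?_⟩
  have hn3 : (3 : ℝ) ≤ n := by exact_mod_cast hn
  have hn2 : (0 : ℝ) < n - 2 := by linarith
  rw [exampleT_eq_diagonal_add_const]
  calc _ ≤ m / (((n : ℝ) - 2) * m) ^ 2 :=
        abs_inv_diagonal_add_const_sub_le _ hm.le (by positivity) (le_exampleT_diag_sub hmM) i j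
    _ ≤ 4 / (((n : ℝ) - 1) ^ 2 * m) := by
        rw [div_le_div_iff₀ (by positivity) (mul_pos (pow_pos (by linarith) 2) hm)]
        -- the difference of the two sides is `m ^ 2 * (n - 3) * (3 * n - 5)`
        nlinarith [mul_nonneg (mul_nonneg (sub_nonneg.2 hn3) hn2.le) (sq_nonneg m)]
end
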